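/- arXiv:2506.21904 — 4 statements merged into one kernel-verified Lean document; each statement's English description precedes it below -/
import Mathlib

section
/- In U(sl2) ⊗ U(sl2), the commutator [h⊗e - e⊗h, h⊗f - f⊗h] equals 2·(h⊗1 + 1⊗h)·Ω, where Ω = (1/2)h⊗h + e⊗f + f⊗e. -/
open UniversalEnvelopingAlgebra TensorProduct

/-!
Expand both sides in `A ⊗ A` and move every `E` and `F` to the left of `H` in each tensor factor
using `[H,E] = 2E`, `[H,F] = -2F`, `[E,F] = H`; the two sides then agree term by term.
-/

theorem lie_tmul_sub_tmul_of_sl2_relations {R A : Type*} [CommRing R] [Ring A] [Algebra R A]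
    {E F H : A} (hHE : ⁅H, E⁆ = (2 : R) • E) (hHF : ⁅H, F⁆ = (-2 : R) • F) (hEF : ⁅E, F⁆ = H) :
    ⁅H ⊗ₜ[R] E - E ⊗ₜ[R] H, H ⊗ₜ[R] F - F ⊗ₜ[R] H⁆
      = (H ⊗ₜ[R] 1 + 1 ⊗ₜ[R] H) * (H ⊗ₜ[R] H + (2 : R) • (E ⊗ₜ[R] F + F ⊗ₜ[R] E)) := by
  rw [Ring.lie_def] at hHE hHF hEF ⊢
  have hHE' : H * E = E * H + (2 : R) • E := by rw [← hHE]; abel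
  have hHF' : H * F = F * H + (-2 : R) • F := by rw [← hHF]; abel
  have hEF' : E * F = F * E + H := by rw [← hEF]; abel
  simp only [mul_sub, sub_mul, mul_add, add_mul, mul_smul_comm,
    Algebra.TensorProduct.tmul_mul_tmul, one_mul, hHE', hHF', hEF']
  simp only [tmul_add, add_tmul, ← smul_tmul', tmul_smul, smul_add, smul_smul]
  module

theorem stmt1_general {L : Type} [LieRing L] [LieAlgebra ℂ L] (e f h : L)
    (he : ⁅h, e⁆ = (2 : ℂ) • e) (hf : ⁅h, f⁆ = (-2 : ℂ) • f) (hef : ⁅e, f⁆ = h) :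
    letI E := ι ℂ (L := L) e
    letI F := ι ℂ (L := L) f
    letI H := ι ℂ (L := L) h
    letI Ω : UniversalEnvelopingAlgebra ℂ L ⊗[ℂ] UniversalEnvelopingAlgebra ℂ L :=
      (1/2 : ℂ) • (H ⊗ₜ H) + E ⊗ₜ F + F ⊗ₜ E
    ⁅H ⊗ₜ[ℂ] E - E ⊗ₜ[ℂ] H, H ⊗ₜ[ℂ] F - F ⊗ₜ[ℂ] H⁆
      = (2 : ℂ) • ((H ⊗ₜ[ℂ] (1 : UniversalEnvelopingAlgebra ℂ L)
          + (1 : UniversalEnvelopingAlgebra ℂ L) ⊗ₜ[ℂ] H) * Ω) := by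
  have two_smul_casimir :
      ∀ X Y Z : UniversalEnvelopingAlgebra ℂ L ⊗[ℂ] UniversalEnvelopingAlgebra ℂ L,
        (2 : ℂ) • ((1 / 2 : ℂ) • X + Y + Z) = X + (2 : ℂ) • (Y + Z) := by
    intro X Y Z
    module
  rw [← mul_smul_comm, two_smul_casimir]
  refine lie_tmul_sub_tmul_of_sl2_relations ?_ ?_ ?_ <;>
    simp only [← LieHom.map_lie, he, hf, hef, map_smul]

/-- In `U(sl₂) ⊗ U(sl₂)`, the commutator `[h⊗e - e⊗h, h⊗f - f⊗h]` equals
`2·(h⊗1 + 1⊗h)·Ω`, where `Ω = (1/2)h⊗h + e⊗f + f⊗e` is the Casimir tensor. -/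
theorem stmt1 {L : Type} [LieRing L] [LieAlgebra ℂ L] (e f h : L)
    (he : ⁅h, e⁆ = (2 : ℂ) • e) (hf : ⁅h, f⁆ = (-2 : ℂ) • f) (hef : ⁅e, f⁆ = h)
    (hspan : Submodule.span ℂ {e, f, h} = ⊤) :
    letI E := ι ℂ (L := L) e
    letI F := ι ℂ (L := L) f
    letI H := ι ℂ (L := L) h
    letI Ω : UniversalEnvelopingAlgebra ℂ L ⊗[ℂ] UniversalEnvelopingAlgebra ℂ L :=
      (1/2 : ℂ) • (H ⊗ₜ H) + E ⊗ₜ F + F ⊗ₜ E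
    ⁅H ⊗ₜ[ℂ] E - E ⊗ₜ[ℂ] H, H ⊗ₜ[ℂ] F - F ⊗ₜ[ℂ] H⁆
      = (2 : ℂ) • ((H ⊗ₜ[ℂ] (1 : UniversalEnvelopingAlgebra ℂ L)
          + (1 : UniversalEnvelopingAlgebra ℂ L) ⊗ₜ[ℂ] H) * Ω) :=
  stmt1_general e f h he hf hef
end

section
/- Define δ: g[u] → g[u] ⊗ g[u] by δ(x⊗uⁿ) = Σ_{a+b=n−1} [x⊗1, Ω]·(u^a ⊗ u^b), where Ω ∈ g⊗g is the Casimir tensor of a nondegenerate invariant symmetric bilinear form on a simple Lie algebra g, and [x⊗1, Ω] is taken in U(g)⊗U(g) (landing in g⊗g). Then δ satisfies the co-Jacobi identity: (Id + σ + σ²) ∘ (δ ⊗ Id) ∘ δ = 0, where σ is the cyclic permutation of tensor factors on g[u]^⊗3. -/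
/-!
`δ` is the extension to `g[u]` of the cobracket `τ x = [x ⊗ 1, Ω]` of `g`, and `(δ ⊗ 1) δ (uⁿ x)`
spreads `(τ ⊗ 1) τ x` over the monomials `uⁱ ⊗ uʲ ⊗ uᵏ` with `i + j + k = n - 2`. This set of
exponents is stable under cyclic rotation, so co-Jacobi for `δ` reduces to co-Jacobi for `τ`.

For `τ`, invariance of `Ω` gives `(τ ⊗ 1) τ x = -(1 ⊗ 1 ⊗ ad x) Θ` with
`Θ = (1 ⊗ τ) Ω = [Ω¹², Ω²³]`. The tensor `Θ` is ad-invariant and, `Ω` being symmetric, cyclically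
symmetric; hence the cyclic sum of `(τ ⊗ 1) τ x` is `-x · Θ = 0`.
-/

open TensorProduct LinearMap

namespace TensorProduct

variable {R M N P M' N' P' : Type*} [CommSemiring R]
  [AddCommMonoid M] [AddCommMonoid N] [AddCommMonoid P] [Module R M] [Module R N] [Module R P]
  [AddCommMonoid M'] [AddCommMonoid N'] [AddCommMonoid P'] [Module R M'] [Module R N'] [Module R P']

def rotate : M ⊗[R] (N ⊗[R] P) ≃ₗ[R] P ⊗[R] (M ⊗[R] N) :=
  (TensorProduct.assoc R M N P).symm ≪≫ₗ TensorProduct.comm R (M ⊗[R] N) P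

@[simp]
lemma rotate_tmul (m : M) (n : N) (p : P) : rotate (m ⊗ₜ[R] (n ⊗ₜ[R] p)) = p ⊗ₜ (m ⊗ₜ n) := rfl

lemma eq_rotate_of_tmul {σ : M ⊗[R] (N ⊗[R] P) →ₗ[R] P ⊗[R] (M ⊗[R] N)}
    (hσ : ∀ m n p, σ (m ⊗ₜ (n ⊗ₜ p)) = p ⊗ₜ (m ⊗ₜ n)) : σ = rotate.toLinearMap := by
  ext m n p
  simp [hσ]

lemma rotate_map (f : M →ₗ[R] M') (g : N →ₗ[R] N') (h : P →ₗ[R] P')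
    (z : M ⊗[R] (N ⊗[R] P)) : rotate (map f (map g h) z) = map h (map f g) (rotate z) :=
  LinearMap.congr_fun (by ext; simp :
    rotate.toLinearMap ∘ₗ map f (map g h) = map h (map f g) ∘ₗ rotate.toLinearMap) z

lemma rotate_lTensor_lTensor (h : P →ₗ[R] P') (z : M ⊗[R] (N ⊗[R] P)) :
    rotate ((h.lTensor N).lTensor M z) = h.rTensor (M ⊗[R] N) (rotate z) := by
  have hz := rotate_map LinearMap.id LinearMap.id h z
  rwa [TensorProduct.map_id] at hz

lemma rotate_rTensor (f : M →ₗ[R] M') (z : M ⊗[R] (N ⊗[R] P)) :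
    rotate (f.rTensor (N ⊗[R] P) z) = (f.rTensor N).lTensor P (rotate z) := by
  have hz := rotate_map f LinearMap.id LinearMap.id z
  rwa [TensorProduct.map_id] at hz

end TensorProduct

namespace CurrentAlgebra

section Casimir

open LieAlgebra

variable {R L : Type*} [CommRing R] [LieRing L] [LieAlgebra R L]

def IsInvariantTensor (Ω : L ⊗[R] L) : Prop :=
  ∀ x : L, (ad R L x).rTensor L Ω + (ad R L x).lTensor L Ω = 0

/-- `casimirAd Ω y = [y ⊗ 1, Ω]`. -/
def casimirAd (Ω : L ⊗[R] L) : L →ₗ[R] L ⊗[R] L where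
  toFun y := (ad R L y).rTensor L Ω
  map_add' y y' := by simp [rTensor_add]
  map_smul' c y := by simp [rTensor_smul]

@[simp]
lemma casimirAd_apply (Ω : L ⊗[R] L) (y : L) : casimirAd Ω y = (ad R L y).rTensor L Ω := rfl

variable {Ω : L ⊗[R] L}

lemma casimirAd_eq_neg_lTensor (hΩ : IsInvariantTensor Ω) (y : L) :
    casimirAd Ω y = -(ad R L y).lTensor L Ω :=
  eq_neg_of_add_eq_zero_left (hΩ y)

lemma casimirAd_eq_sum (hΩ : IsInvariantTensor Ω) {S : Finset (L × L)}
    (hS : Ω = ∑ q ∈ S, q.1 ⊗ₜ q.2) (y : L) : casimirAd Ω y = ∑ q ∈ S, q.1 ⊗ₜ ⁅q.2, y⁆ := by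
  rw [casimirAd_eq_neg_lTensor hΩ, hS]
  simp only [map_sum, lTensor_tmul, ad_apply, ← Finset.sum_neg_distrib, ← tmul_neg, lie_skew]

lemma casimirAd_lie (hΩ : IsInvariantTensor Ω) (x y : L) :
    casimirAd Ω ⁅x, y⁆ =
      (ad R L x).rTensor L (casimirAd Ω y) + (ad R L x).lTensor L (casimirAd Ω y) := by
  have hcomm : (ad R L x).lTensor L ((ad R L y).rTensor L Ω) =
      (ad R L y).rTensor L ((ad R L x).lTensor L Ω) := by
    rw [← comp_apply, ← comp_apply, lTensor_comp_rTensor, rTensor_comp_lTensor]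
  have had : ad R L ⁅x, y⁆ = ad R L x ∘ₗ ad R L y - ad R L y ∘ₗ ad R L x := by
    ext z
    simp
  rw [casimirAd_apply, casimirAd_apply, hcomm, eq_neg_of_add_eq_zero_right (hΩ x), map_neg,
    ← rTensor_comp_apply, ← rTensor_comp_apply, had, rTensor_sub, LinearMap.sub_apply,
    sub_eq_add_neg]

/-- Both sides are `[Ω¹², Ω²³]`. -/
lemma assoc_rTensor_casimirAd_self (hΩ : IsInvariantTensor Ω) :
    TensorProduct.assoc R L L L ((casimirAd Ω).rTensor L Ω) = (casimirAd Ω).lTensor L Ω := by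
  classical
  obtain ⟨S, hS⟩ := exists_finset Ω
  set τ := casimirAd Ω with hτ
  have hτS : ∀ y, τ y = ∑ q ∈ S, q.1 ⊗ₜ ⁅q.2, y⁆ := casimirAd_eq_sum hΩ hS
  calc TensorProduct.assoc R L L L (τ.rTensor L Ω)
      = ∑ p ∈ S, ∑ q ∈ S, q.1 ⊗ₜ (⁅q.2, p.1⁆ ⊗ₜ p.2) := by
        conv_lhs => rw [hS]
        simp [hτS, sum_tmul]
    _ = ∑ q ∈ S, q.1 ⊗ₜ τ q.2 := by
        rw [Finset.sum_comm]
        simp [hτ, hS, tmul_sum]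
    _ = τ.lTensor L Ω := by
        conv_rhs => rw [hS]
        simp

lemma rotate_lTensor_casimirAd_self (hΩ : IsInvariantTensor Ω)
    (hsym : TensorProduct.comm R L L Ω = Ω) :
    rotate ((casimirAd Ω).lTensor L Ω) = (casimirAd Ω).lTensor L Ω := by
  classical
  obtain ⟨S, hS⟩ := exists_finset Ω
  set τ := casimirAd Ω with hτ
  have hτS : ∀ y, τ y = ∑ q ∈ S, q.1 ⊗ₜ ⁅q.2, y⁆ := casimirAd_eq_sum hΩ hS
  calc rotate (τ.lTensor L Ω)
      = ∑ p ∈ S, ∑ q ∈ S, q.2 ⊗ₜ (p.1 ⊗ₜ ⁅p.2, q.1⁆) := by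
        conv_lhs => rw [hS]
        simp [hτ, hS, tmul_sum]
    _ = ∑ q ∈ S, q.2 ⊗ₜ τ q.1 := by
        rw [Finset.sum_comm]
        simp [hτS, tmul_sum]
    _ = τ.lTensor L Ω := by
        conv_rhs => rw [← hsym, hS]
        simp

lemma lTensor_casimirAd_self_invariant (hΩ : IsInvariantTensor Ω) (x : L) :
    (ad R L x).rTensor (L ⊗[R] L) ((casimirAd Ω).lTensor L Ω)
      + ((ad R L x).rTensor L).lTensor L ((casimirAd Ω).lTensor L Ω)
      + ((ad R L x).lTensor L).lTensor L ((casimirAd Ω).lTensor L Ω) = 0 := by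
  set τ := casimirAd Ω
  have hτ : (ad R L x).rTensor L ∘ₗ τ + (ad R L x).lTensor L ∘ₗ τ = τ ∘ₗ ad R L x := by
    ext y
    simp [τ, casimirAd_lie hΩ]
  have hcomm : (ad R L x).rTensor (L ⊗[R] L) (τ.lTensor L Ω) =
      τ.lTensor L ((ad R L x).rTensor L Ω) := by
    rw [← comp_apply, ← comp_apply, rTensor_comp_lTensor, lTensor_comp_rTensor]
  rw [hcomm, add_assoc, ← lTensor_comp_apply, ← lTensor_comp_apply, ← LinearMap.add_apply,
    ← lTensor_add, hτ, lTensor_comp_apply, ← map_add, hΩ x, map_zero]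

lemma assoc_rTensor_casimirAd_casimirAd (hΩ : IsInvariantTensor Ω) (x : L) :
    TensorProduct.assoc R L L L ((casimirAd Ω).rTensor L (casimirAd Ω x)) =
      -((ad R L x).lTensor L).lTensor L ((casimirAd Ω).lTensor L Ω) := by
  rw [casimirAd_eq_neg_lTensor hΩ, map_neg, map_neg, ← assoc_rTensor_casimirAd_self hΩ]
  change _ = -map LinearMap.id (map LinearMap.id (ad R L x)) _
  rw [map_map_assoc, TensorProduct.map_id, ← comp_apply, ← comp_apply, rTensor_comp_lTensor,
    map_comp_rTensor, LinearMap.id_comp]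

theorem casimirAd_coJacobi (hΩ : IsInvariantTensor Ω) (hsym : TensorProduct.comm R L L Ω = Ω) :
    (LinearMap.id + rotate.toLinearMap + rotate.toLinearMap ∘ₗ rotate.toLinearMap) ∘ₗ
      (TensorProduct.assoc R L L L).toLinearMap ∘ₗ (casimirAd Ω).rTensor L ∘ₗ casimirAd Ω = 0 := by
  ext x
  have hinv := lTensor_casimirAd_self_invariant hΩ x
  simp only [comp_apply, LinearMap.add_apply, id_apply, LinearEquiv.coe_coe,
    assoc_rTensor_casimirAd_casimirAd hΩ x, map_neg, rotate_lTensor_lTensor, rotate_rTensor,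
    rotate_lTensor_casimirAd_self hΩ hsym, LinearMap.zero_apply]
  linear_combination (norm := abel) -hinv

end Casimir

section Polynomial

open Polynomial Finset

variable {R M W : Type*} [CommSemiring R] [AddCommMonoid M] [Module R M] [AddCommMonoid W]
  [Module R W]

lemma tensor_ext_X_pow {F G : R[X] ⊗[R] M →ₗ[R] W}
    (h : ∀ (n : ℕ) (x : M), F ((X ^ n : R[X]) ⊗ₜ x) = G ((X ^ n : R[X]) ⊗ₜ x)) : F = G := by
  refine TensorProduct.ext (lhom_ext' fun n => ext_ring (LinearMap.ext fun x => ?_))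
  simpa [← monomial_one_right_eq_X_pow] using h n x

lemma sum_range_sum_range_rotate {A : Type*} [AddCommMonoid A] (n : ℕ) (H : ℕ → ℕ → ℕ → A) :
    ∑ a ∈ range n, ∑ c ∈ range a, H (n - 1 - a) c (a - 1 - c)
      = ∑ a ∈ range n, ∑ c ∈ range a, H c (a - 1 - c) (n - 1 - a) := by
  rw [Finset.sum_sigma', Finset.sum_sigma']
  refine Finset.sum_nbij' (fun x => ⟨n - x.1 + x.2, n - 1 - x.1⟩)
    (fun y => ⟨n - 1 - y.2, y.1 - 1 - y.2⟩) ?_ ?_ ?_ ?_ ?_ <;>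
  rintro ⟨a, c⟩ hx <;>
  simp only [Finset.mem_sigma, Finset.mem_range, Sigma.mk.inj_iff, heq_eq_eq] at hx ⊢
  · omega
  · omega
  · omega
  · omega
  · congr 1 <;> omega

variable (R M) in
/-- The exponents `(c, a - 1 - c, n - 1 - a)` run over the triples with sum `n - 2`. -/
noncomputable def monomialTriples (n : ℕ) :
    M ⊗[R] (M ⊗[R] M) →ₗ[R] (R[X] ⊗[R] M) ⊗[R] ((R[X] ⊗[R] M) ⊗[R] (R[X] ⊗[R] M)) :=
  ∑ a ∈ range n, ∑ c ∈ range a,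
    map (mk R R[X] M (X ^ c)) (map (mk R R[X] M (X ^ (a - 1 - c))) (mk R R[X] M (X ^ (n - 1 - a))))

lemma rotate_monomialTriples (n : ℕ) (z : M ⊗[R] (M ⊗[R] M)) :
    rotate (monomialTriples R M n z) = monomialTriples R M n (rotate z) := by
  simp only [monomialTriples, LinearMap.coe_sum, Finset.sum_apply, map_sum, rotate_map]
  exact sum_range_sum_range_rotate n fun i j k =>
    map (mk R R[X] M (X ^ i)) (map (mk R R[X] M (X ^ j)) (mk R R[X] M (X ^ k))) (rotate z)

lemma assoc_map_mk_tmul (f g h : R[X]) (w : M ⊗[R] M) (v : M) :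
    TensorProduct.assoc R _ _ _ (map (mk R R[X] M f) (mk R R[X] M g) w ⊗ₜ (h ⊗ₜ v)) =
      map (mk R R[X] M f) (map (mk R R[X] M g) (mk R R[X] M h))
        (TensorProduct.assoc R M M M (w ⊗ₜ v)) := by
  rw [map_map_assoc, map_tmul, mk_apply]

def IsCurrentExtension (τ : M →ₗ[R] M ⊗[R] M)
    (δ : R[X] ⊗[R] M →ₗ[R] (R[X] ⊗[R] M) ⊗[R] (R[X] ⊗[R] M)) : Prop :=
  ∀ (n : ℕ) (x : M), δ ((X ^ n : R[X]) ⊗ₜ x) =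
    ∑ a ∈ range n, map (mk R R[X] M (X ^ a)) (mk R R[X] M (X ^ (n - 1 - a))) (τ x)

variable {τ : M →ₗ[R] M ⊗[R] M} {δ : R[X] ⊗[R] M →ₗ[R] (R[X] ⊗[R] M) ⊗[R] (R[X] ⊗[R] M)}

lemma assoc_rTensor_map_mk (hδ : IsCurrentExtension τ δ) (a b : ℕ) (y : M ⊗[R] M) :
    TensorProduct.assoc R _ _ _ (δ.rTensor _ (map (mk R R[X] M (X ^ a)) (mk R R[X] M (X ^ b)) y)) =
      ∑ c ∈ range a,
        map (mk R R[X] M (X ^ c)) (map (mk R R[X] M (X ^ (a - 1 - c))) (mk R R[X] M (X ^ b)))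
          (TensorProduct.assoc R M M M (τ.rTensor M y)) := by
  induction y using TensorProduct.induction_on with
  | zero => simp
  | tmul u v => simp [hδ _, sum_tmul, assoc_map_mk_tmul]
  | add y y' hy hy' => simp only [map_add, hy, hy', Finset.sum_add_distrib]

lemma assoc_rTensor_apply_X_pow_tmul (hδ : IsCurrentExtension τ δ) (n : ℕ) (x : M) :
    TensorProduct.assoc R _ _ _ (δ.rTensor _ (δ ((X ^ n : R[X]) ⊗ₜ x))) =
      monomialTriples R M n (TensorProduct.assoc R M M M (τ.rTensor M (τ x))) := by
  simp only [hδ n, map_sum, assoc_rTensor_map_mk hδ, monomialTriples, LinearMap.coe_sum,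
    Finset.sum_apply]

end Polynomial

end CurrentAlgebra

open CurrentAlgebra

theorem stmt11_general {g : Type} [LieRing g] [LieAlgebra ℂ g]
    (Ω : g ⊗[ℂ] g)
    (hinv : ∀ x : g,
      TensorProduct.map (LieAlgebra.ad ℂ g x) LinearMap.id Ω
        + TensorProduct.map LinearMap.id (LieAlgebra.ad ℂ g x) Ω = 0)
    (hsym : TensorProduct.comm ℂ g g Ω = Ω)
    (δ : (Polynomial ℂ ⊗[ℂ] g) →ₗ[ℂ] (Polynomial ℂ ⊗[ℂ] g) ⊗[ℂ] (Polynomial ℂ ⊗[ℂ] g))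
    (hδ : ∀ (n : ℕ) (x : g),
      δ ((Polynomial.X ^ n : Polynomial ℂ) ⊗ₜ[ℂ] x)
        = ∑ a ∈ Finset.range n,
            (TensorProduct.map
              (TensorProduct.mk ℂ (Polynomial ℂ) g ((Polynomial.X : Polynomial ℂ) ^ a))
              (TensorProduct.mk ℂ (Polynomial ℂ) g ((Polynomial.X : Polynomial ℂ) ^ (n - 1 - a))))
              ((TensorProduct.map (LieAlgebra.ad ℂ g x) LinearMap.id) Ω))
    (σ : ((Polynomial ℂ ⊗[ℂ] g) ⊗[ℂ] ((Polynomial ℂ ⊗[ℂ] g) ⊗[ℂ] (Polynomial ℂ ⊗[ℂ] g)))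
      →ₗ[ℂ] ((Polynomial ℂ ⊗[ℂ] g) ⊗[ℂ] ((Polynomial ℂ ⊗[ℂ] g) ⊗[ℂ] (Polynomial ℂ ⊗[ℂ] g))))
    (hσ : ∀ a b c : Polynomial ℂ ⊗[ℂ] g, σ (a ⊗ₜ (b ⊗ₜ c)) = c ⊗ₜ (a ⊗ₜ b)) :
    (LinearMap.id + σ + σ ∘ₗ σ) ∘ₗ
      ((TensorProduct.assoc ℂ (Polynomial ℂ ⊗[ℂ] g) (Polynomial ℂ ⊗[ℂ] g)
          (Polynomial ℂ ⊗[ℂ] g)).toLinearMap ∘ₗ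
        TensorProduct.map δ LinearMap.id) ∘ₗ δ = 0 := by
  obtain rfl : σ = rotate.toLinearMap := eq_rotate_of_tmul hσ
  rw [← LinearMap.rTensor_def]
  apply tensor_ext_X_pow
  intro n x
  have hcoJ := LinearMap.congr_fun (casimirAd_coJacobi hinv hsym) x
  simp only [comp_apply, LinearMap.add_apply, id_apply, LinearEquiv.coe_coe,
    LinearMap.zero_apply] at hcoJ ⊢
  rw [assoc_rTensor_apply_X_pow_tmul (τ := casimirAd Ω) hδ, rotate_monomialTriples,
    rotate_monomialTriples, ← map_add, ← map_add, hcoJ, map_zero]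

/-- Let `g` be a finite-dimensional simple Lie algebra over `ℂ` with invariant symmetric
Casimir tensor `Ω ∈ g ⊗ g`, and define `δ : g[u] → g[u] ⊗ g[u]` by
`δ(uⁿ ⊗ x) = Σ_{a+b=n−1} [x⊗1, Ω]·(uᵃ ⊗ uᵇ)` (where `[x⊗1, Ω] = (ad x ⊗ id)(Ω) ∈ g⊗g`).
Then `δ` satisfies the co-Jacobi identity `(Id + σ + σ²) ∘ (δ ⊗ Id) ∘ δ = 0`, where `σ`
is the cyclic permutation of the three tensor factors. -/
theorem stmt11 {g : Type} [LieRing g] [LieAlgebra ℂ g] [LieAlgebra.IsSimple ℂ g]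
    [FiniteDimensional ℂ g]
    (Ω : g ⊗[ℂ] g)
    (hinv : ∀ x : g,
      TensorProduct.map (LieAlgebra.ad ℂ g x) LinearMap.id Ω
        + TensorProduct.map LinearMap.id (LieAlgebra.ad ℂ g x) Ω = 0)
    (hsym : TensorProduct.comm ℂ g g Ω = Ω)
    (δ : (Polynomial ℂ ⊗[ℂ] g) →ₗ[ℂ] (Polynomial ℂ ⊗[ℂ] g) ⊗[ℂ] (Polynomial ℂ ⊗[ℂ] g))
    (hδ : ∀ (n : ℕ) (x : g),
      δ ((Polynomial.X ^ n : Polynomial ℂ) ⊗ₜ[ℂ] x)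
        = ∑ a ∈ Finset.range n,
            (TensorProduct.map
              (TensorProduct.mk ℂ (Polynomial ℂ) g ((Polynomial.X : Polynomial ℂ) ^ a))
              (TensorProduct.mk ℂ (Polynomial ℂ) g ((Polynomial.X : Polynomial ℂ) ^ (n - 1 - a))))
              ((TensorProduct.map (LieAlgebra.ad ℂ g x) LinearMap.id) Ω))
    (σ : ((Polynomial ℂ ⊗[ℂ] g) ⊗[ℂ] ((Polynomial ℂ ⊗[ℂ] g) ⊗[ℂ] (Polynomial ℂ ⊗[ℂ] g)))
      →ₗ[ℂ] ((Polynomial ℂ ⊗[ℂ] g) ⊗[ℂ] ((Polynomial ℂ ⊗[ℂ] g) ⊗[ℂ] (Polynomial ℂ ⊗[ℂ] g))))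
    (hσ : ∀ a b c : Polynomial ℂ ⊗[ℂ] g, σ (a ⊗ₜ (b ⊗ₜ c)) = c ⊗ₜ (a ⊗ₜ b)) :
    (LinearMap.id + σ + σ ∘ₗ σ) ∘ₗ
      ((TensorProduct.assoc ℂ (Polynomial ℂ ⊗[ℂ] g) (Polynomial ℂ ⊗[ℂ] g)
          (Polynomial ℂ ⊗[ℂ] g)).toLinearMap ∘ₗ
        TensorProduct.map δ LinearMap.id) ∘ₗ δ = 0 :=
  stmt11_general Ω hinv hsym δ hδ σ hσ
end

section
/- Let H be a Hopf algebra over ℂ[ℏ], g a Lie algebra mapped into H via a Lie algebra homomorphism ι with Δ(ι(x)) = ι(x)⊗1 + 1⊗ι(x), and let J: g → H satisfy Δ(J(x)) = J(x)⊗1 + 1⊗J(x) + (ℏ/2)[ι(x)⊗1, Ω_ι], where Ω_ι = (ι⊗ι)(Ω) for an invariant symmetric tensor Ω ∈ g⊗g. If m denotes multiplication in H and S the antipode, then S(J(x)) = −J(x) − (ℏ/2)·m([Ω_ι, ι(x)⊗1]). -/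
/-!
Applying `m ∘ (S ⊗ id)` to `Δ(J x)` and using `ε(J x) = 0` gives
`S(J x) = -J x - (ℏ/2) · m((S ⊗ id)[ι x ⊗ 1, Ω_ι])`. Commutation with `ι x ⊗ 1` only acts on the
first tensor factor, where it produces `ι [x, u]`; these elements are primitive, so `S` negates
them, which turns `[ι x ⊗ 1, Ω_ι]` into `[Ω_ι, ι x ⊗ 1]`.
-/

open TensorProduct

attribute [local instance 100] LieRing.ofAssociativeRing

namespace HopfAlgebra

variable {R A : Type*} [CommSemiring R] [Ring A] [HopfAlgebra R A]

theorem antipode_eq_neg_sub_of_comul_eq {a : A} {t : A ⊗[R] A}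
    (hΔ : Coalgebra.comul (R := R) a = a ⊗ₜ[R] 1 + 1 ⊗ₜ[R] a + t)
    (hε : Coalgebra.counit (R := R) a = 0) :
    antipode R a = -a - LinearMap.mul' R A ((antipode R).rTensor A t) := by
  have h := mul_antipode_rTensor_comul_apply (R := R) a
  simp only [hΔ, hε, map_add, LinearMap.rTensor_tmul, LinearMap.mul'_apply, antipode_one,
    mul_one, one_mul, map_zero] at h
  rw [← sub_eq_zero, ← h]
  abel

theorem antipode_eq_neg_of_comul_eq {a : A}
    (hΔ : Coalgebra.comul (R := R) a = a ⊗ₜ[R] 1 + 1 ⊗ₜ[R] a)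
    (hε : Coalgebra.counit (R := R) a = 0) :
    antipode R a = -a := by
  simpa using antipode_eq_neg_sub_of_comul_eq (t := 0) (by rw [hΔ, add_zero]) hε

end HopfAlgebra

section

variable {R A B : Type*} [CommRing R] [Ring A] [Algebra R A] [Ring B] [Algebra R B]

theorem lie_tmul_one_eq_rTensor (a : A) (t : A ⊗[R] B) :
    ⁅a ⊗ₜ[R] (1 : B), t⁆ = (LieAlgebra.ad R A a).rTensor B t := by
  induction t using TensorProduct.induction_on with
  | zero => simp
  | tmul u v =>
    simp [Ring.lie_def, Algebra.TensorProduct.tmul_mul_tmul, TensorProduct.sub_tmul]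
  | add t s ht hs => rw [lie_add, map_add, ht, hs]

end

theorem rTensor_antipode_lie_tmul_one_map {R A B g M : Type*} [CommRing R] [Ring A]
    [HopfAlgebra R A] [Ring B] [Algebra R B] [LieRing g] [LieAlgebra R g]
    [AddCommGroup M] [Module R M] (ι : g →ₗ⁅R⁆ A)
    (hι : ∀ x : g, Coalgebra.comul (R := R) (ι x) = ι x ⊗ₜ[R] 1 + 1 ⊗ₜ[R] ι x)
    (hει : ∀ x : g, Coalgebra.counit (R := R) (ι x) = 0)
    (f : M →ₗ[R] B) (x : g) (Ω : g ⊗[R] M) :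
    (HopfAlgebra.antipode R).rTensor B ⁅ι x ⊗ₜ[R] (1 : B), map ι.toLinearMap f Ω⁆
      = ⁅map ι.toLinearMap f Ω, ι x ⊗ₜ[R] (1 : B)⁆ := by
  have hS : HopfAlgebra.antipode R ∘ₗ LieAlgebra.ad R A (ι x) ∘ₗ ι.toLinearMap
      = -(LieAlgebra.ad R A (ι x) ∘ₗ ι.toLinearMap) := by
    ext u
    have hbracket : LieAlgebra.ad R A (ι x) (ι u) = ι ⁅x, u⁆ := by simp
    simp only [LinearMap.comp_apply, LieHom.coe_toLinearMap, LinearMap.neg_apply, hbracket,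
      HopfAlgebra.antipode_eq_neg_of_comul_eq (hι _) (hει _)]
  have hmap (h : A →ₗ[R] A) : h.rTensor B (map ι.toLinearMap f Ω) = map (h ∘ₗ ι) f Ω := by
    rw [← LinearMap.comp_apply, LinearMap.rTensor_comp_map]
  calc (HopfAlgebra.antipode R).rTensor B ⁅ι x ⊗ₜ[R] (1 : B), map ι.toLinearMap f Ω⁆
      = map (HopfAlgebra.antipode R ∘ₗ LieAlgebra.ad R A (ι x) ∘ₗ ι.toLinearMap) f Ω := by
        rw [lie_tmul_one_eq_rTensor, ← LinearMap.comp_apply, ← LinearMap.rTensor_comp, hmap,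
          LinearMap.comp_assoc]
    _ = -⁅ι x ⊗ₜ[R] (1 : B), map ι.toLinearMap f Ω⁆ := by
        rw [hS, lie_tmul_one_eq_rTensor, ← LinearMap.neg_comp, ← hmap, LinearMap.rTensor_neg,
          LinearMap.neg_apply]
    _ = ⁅map ι.toLinearMap f Ω, ι x ⊗ₜ[R] (1 : B)⁆ := lie_skew _ _

theorem stmt13_general {H g : Type} [Ring H] [HopfAlgebra (Polynomial ℂ) H]
    [LieRing g] [LieAlgebra (Polynomial ℂ) g]
    (ι : g →ₗ⁅Polynomial ℂ⁆ H) (J : g →ₗ[Polynomial ℂ] H)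
    (Ω : g ⊗[Polynomial ℂ] g)
    (hι : ∀ x : g, Coalgebra.comul (R := Polynomial ℂ) (ι x)
      = (ι x) ⊗ₜ[Polynomial ℂ] (1 : H) + (1 : H) ⊗ₜ[Polynomial ℂ] (ι x))
    (hει : ∀ x : g, Coalgebra.counit (R := Polynomial ℂ) (ι x) = 0)
    (hεJ : ∀ x : g, Coalgebra.counit (R := Polynomial ℂ) (J x) = 0)
    (hJ : ∀ x : g, Coalgebra.comul (R := Polynomial ℂ) (J x)
      = (J x) ⊗ₜ[Polynomial ℂ] (1 : H) + (1 : H) ⊗ₜ[Polynomial ℂ] (J x)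
        + (Polynomial.C (1/2 : ℂ) * Polynomial.X : Polynomial ℂ) •
            ⁅(ι x) ⊗ₜ[Polynomial ℂ] (1 : H),
              TensorProduct.map ι.toLinearMap ι.toLinearMap Ω⁆) :
    ∀ x : g, HopfAlgebra.antipode (R := Polynomial ℂ) (J x)
      = -(J x) - (Polynomial.C (1/2 : ℂ) * Polynomial.X : Polynomial ℂ) •
          (LinearMap.mul' (Polynomial ℂ) H)
            ⁅TensorProduct.map ι.toLinearMap ι.toLinearMap Ω,
              (ι x) ⊗ₜ[Polynomial ℂ] (1 : H)⁆ := by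
  intro x
  rw [HopfAlgebra.antipode_eq_neg_sub_of_comul_eq (hJ x) (hεJ x), map_smul, map_smul,
    rTensor_antipode_lie_tmul_one_map ι hι hει]

/-- Let `H` be a Hopf algebra over `ℂ[ℏ]`, `ι : g → H` a Lie algebra homomorphism (into `H`
with the commutator bracket) whose values are primitive, and `J : g → H` a linear map with
`Δ(J(x)) = J(x)⊗1 + 1⊗J(x) + (ℏ/2)[ι(x)⊗1, Ω_ι]`, where `Ω_ι = (ι⊗ι)(Ω)` for an invariant
symmetric tensor `Ω ∈ g ⊗ g`, and `ε(ι(x)) = ε(J(x)) = 0`. Then the antipode satisfies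
`S(J(x)) = −J(x) − (ℏ/2)·m([Ω_ι, ι(x)⊗1])`. -/
theorem stmt13 {H g : Type} [Ring H] [HopfAlgebra (Polynomial ℂ) H]
    [LieRing g] [LieAlgebra (Polynomial ℂ) g]
    (ι : g →ₗ⁅Polynomial ℂ⁆ H) (J : g →ₗ[Polynomial ℂ] H)
    (Ω : g ⊗[Polynomial ℂ] g)
    (hinv : ∀ x : g,
      TensorProduct.map (LieAlgebra.ad (Polynomial ℂ) g x) LinearMap.id Ω
        + TensorProduct.map LinearMap.id (LieAlgebra.ad (Polynomial ℂ) g x) Ω = 0)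
    (hsym : TensorProduct.comm (Polynomial ℂ) g g Ω = Ω)
    (hι : ∀ x : g, Coalgebra.comul (R := Polynomial ℂ) (ι x)
      = (ι x) ⊗ₜ[Polynomial ℂ] (1 : H) + (1 : H) ⊗ₜ[Polynomial ℂ] (ι x))
    (hει : ∀ x : g, Coalgebra.counit (R := Polynomial ℂ) (ι x) = 0)
    (hεJ : ∀ x : g, Coalgebra.counit (R := Polynomial ℂ) (J x) = 0)
    (hJ : ∀ x : g, Coalgebra.comul (R := Polynomial ℂ) (J x)
      = (J x) ⊗ₜ[Polynomial ℂ] (1 : H) + (1 : H) ⊗ₜ[Polynomial ℂ] (J x)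
        + (Polynomial.C (1/2 : ℂ) * Polynomial.X : Polynomial ℂ) •
            ⁅(ι x) ⊗ₜ[Polynomial ℂ] (1 : H),
              TensorProduct.map ι.toLinearMap ι.toLinearMap Ω⁆) :
    ∀ x : g, HopfAlgebra.antipode (R := Polynomial ℂ) (J x)
      = -(J x) - (Polynomial.C (1/2 : ℂ) * Polynomial.X : Polynomial ℂ) •
          (LinearMap.mul' (Polynomial ℂ) H)
            ⁅TensorProduct.map ι.toLinearMap ι.toLinearMap Ω,
              (ι x) ⊗ₜ[Polynomial ℂ] (1 : H)⁆ :=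
  stmt13_general ι J Ω hι hει hεJ hJ
end

section
/- In the setting of the previous statement (associative algebra A with sl2 elements e, f, h and adjoint-intertwining elements Je, Jf, Jh), the following identity holds: [Je·f + Jf·e, f·e] = (Jf·e − f·Je)·h. -/
/-!
Ad is a derivation of the associative product, so the bracket expands to
`Jh e f - Je f h + Jf h e - f Jh e`. Reordering the products `e f`, `Je f`, `h e` and `f Jh`
by the commutation relations leaves the claim; the last one needs `[f, Jh] = 2 Jf`, which is
the Jacobi identity applied to `Jh = [e, Jf]` with `[f, Jf] = 0`.
-/

namespace Ring

variable {A : Type*} [Ring A]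

theorem lie_mul (x y z : A) : ⁅x, y * z⁆ = ⁅x, y⁆ * z + y * ⁅x, z⁆ := by
  simp only [lie_def]; noncomm_ring

theorem mul_lie (x y z : A) : ⁅x * y, z⁆ = x * ⁅y, z⁆ + ⁅x, z⁆ * y := by
  simp only [lie_def]; noncomm_ring

theorem mul_eq_mul_add_of_lie_eq {x y c : A} (h : ⁅x, y⁆ = c) : x * y = y * x + c :=
  eq_add_of_sub_eq' h

end Ring

theorem stmt16_general {A : Type} [Ring A] [Algebra ℂ A]
    (e f h Je Jf Jh : A)
    (hhe : ⁅h, e⁆ = (2 : ℂ) • e) (hef : ⁅e, f⁆ = h)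
    (h2 : ⁅e, Jf⁆ = Jh) (h3 : ⁅f, Je⁆ = -Jh)
    (h4 : ⁅h, Jf⁆ = (-2 : ℂ) • Jf) (h7 : ⁅e, Je⁆ = 0) (h8 : ⁅f, Jf⁆ = 0) :
    ⁅Je * f + Jf * e, f * e⁆ = (Jf * e - f * Je) * h := by
  let : LieRing A := LieRing.ofAssociativeRing
  have hfe : ⁅f, e⁆ = -h := by rw [← lie_skew, hef]
  have hJef : ⁅Je, f⁆ = Jh := by rw [← lie_skew, h3, neg_neg]
  have hJee : ⁅Je, e⁆ = 0 := by rw [← lie_skew, h7, neg_zero]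
  have hJff : ⁅Jf, f⁆ = 0 := by rw [← lie_skew, h8, neg_zero]
  have hJfe : ⁅Jf, e⁆ = -Jh := by rw [← lie_skew, h2]
  have hfJh : ⁅f, Jh⁆ = (2 : ℂ) • Jf := by
    rw [← h2, leibniz_lie, h8, lie_zero, add_zero, hfe, neg_lie, h4, ← neg_smul, neg_neg]
  have hJe : ⁅Je * f, f * e⁆ = Jh * (e * f) - Je * f * h := by
    rw [Ring.mul_lie, Ring.lie_mul, Ring.lie_mul, lie_self, hfe, hJef, hJee]; noncomm_ring
  have hJf : ⁅Jf * e, f * e⁆ = Jf * (h * e) - f * Jh * e := by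
    rw [Ring.mul_lie, Ring.lie_mul, Ring.lie_mul, lie_self, hef, hJff, hJfe]; noncomm_ring
  rw [add_lie, hJe, hJf, Ring.mul_eq_mul_add_of_lie_eq hef, Ring.mul_eq_mul_add_of_lie_eq hJef,
    Ring.mul_eq_mul_add_of_lie_eq hhe, Ring.mul_eq_mul_add_of_lie_eq hfJh]
  noncomm_ring [smul_mul_assoc, mul_smul_comm]

/-- Let `A` be an associative `ℂ`-algebra containing `e, f, h` satisfying the `sl₂`
commutator relations, and `Je, Jf, Jh ∈ A` intertwining the adjoint action. Then
`[Je·f + Jf·e, f·e] = (Jf·e − f·Je)·h`. -/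
theorem stmt16 {A : Type} [Ring A] [Algebra ℂ A]
    (e f h Je Jf Jh : A)
    (hhe : ⁅h, e⁆ = (2 : ℂ) • e) (hhf : ⁅h, f⁆ = (-2 : ℂ) • f) (hef : ⁅e, f⁆ = h)
    (h1 : ⁅h, Je⁆ = (2 : ℂ) • Je) (h2 : ⁅e, Jf⁆ = Jh) (h3 : ⁅f, Je⁆ = -Jh)
    (h4 : ⁅h, Jf⁆ = (-2 : ℂ) • Jf) (h7 : ⁅e, Je⁆ = 0) (h8 : ⁅f, Jf⁆ = 0) :
    ⁅Je * f + Jf * e, f * e⁆ = (Jf * e - f * Je) * h :=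
  stmt16_general e f h Je Jf Jh hhe hef h2 h3 h4 h7 h8
end
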